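/- arXiv:0911.0530 — 2 statements merged into one kernel-verified Lean document; each statement's English description precedes it below -/
import Mathlib

section
/- If p is analytic on the unit disk E with p(0) = 1, α : E → ℂ is analytic with Re α(z) > 0 on E, 0 ≤ β < 1, and Re[p(z) + z p'(z)/α(z)] > β for all z ∈ E, then Re p(z) > β for all z ∈ E. -/
/-!
If `Re p ≤ β` somewhere in the disk, pick such a point `z` of least modulus. Since `Re p(0) = 1 > β`,
continuity gives `Re p(z) = β` as the minimum of `Re p` over the closed disk `|w| ≤ |z|`. Minimality
along the circle `|w| = |z|` makes `z p'(z)` real, and along the radius makes it nonpositive (Jack's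
lemma). As `Re α(z) > 0`, this gives `Re (z p'(z) / α(z)) ≤ 0`, contradicting the hypothesis at `z`.
-/

open Metric Complex Set Filter

theorem re_mul_deriv_nonpos_of_isMinOn_closedBall {f : ℂ → ℂ} {z c : ℂ} (hf : HasDerivAt f c z)
    (hmin : IsMinOn (fun w ↦ (f w).re) (closedBall 0 ‖z‖) z) : (z * c).re ≤ 0 := by
  have hu := reCLM.hasFDerivAt.comp z (hf.hasFDerivAt.restrictScalars ℝ)
  have hz : z ∈ closedBall (0 : ℂ) ‖z‖ := mem_closedBall_zero_iff.2 le_rfl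
  have hinward : 0 - z ∈ posTangentConeAt (closedBall 0 ‖z‖) z :=
    sub_mem_posTangentConeAt_of_segment_subset <|
      (convex_closedBall 0 ‖z‖).segment_subset hz (mem_closedBall_self (norm_nonneg z))
  simpa [mul_re] using hmin.localize.hasFDerivWithinAt_nonneg hu.hasFDerivWithinAt hinward

theorem im_mul_deriv_eq_zero_of_isMinOn_sphere {f : ℂ → ℂ} {z c : ℂ} (hf : HasDerivAt f c z)
    (hmin : IsMinOn (fun w ↦ (f w).re) (sphere 0 ‖z‖) z) : (z * c).im = 0 := by
  set γ : ℝ → ℂ := fun θ ↦ exp (θ * I) * z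
  have hγ : HasDerivAt γ (I * z) 0 := by
    simpa using (((hasDerivAt_id (0 : ℂ)).mul_const I).cexp.mul_const z).comp_ofReal
  have hγ0 : γ 0 = z := by simp [γ]
  have hfγ := reCLM.hasFDerivAt.comp_hasDerivAt (0 : ℝ) ((hγ0 ▸ hf).comp 0 hγ)
  have hloc : IsLocalMin (fun θ ↦ (f (γ θ)).re) 0 :=
    Eventually.of_forall fun θ ↦ by
      simpa [hγ0] using hmin (show γ θ ∈ sphere 0 ‖z‖ by simp [γ, norm_exp])
  have := hloc.hasDerivAt_eq_zero hfγ
  rwa [reCLM_apply, show c * (I * z) = I * (z * c) by ring, I_mul_re, neg_eq_zero] at this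

theorem exists_eq_isMinOn_closedBall {E : Type*} [NormedAddCommGroup E] [NormedSpace ℝ E]
    [ProperSpace E] {u : E → ℝ} {β : ℝ} {z₀ : E} (hu : ContinuousOn u (closedBall 0 ‖z₀‖))
    (h0 : β < u 0) (hz₀ : u z₀ ≤ β) :
    ∃ z ∈ closedBall (0 : E) ‖z₀‖, u z = β ∧ IsMinOn u (closedBall 0 ‖z‖) z := by
  set K := closedBall (0 : E) ‖z₀‖ ∩ u ⁻¹' Iic β
  have hK : IsCompact K := (isCompact_closedBall _ _).of_isClosed_subset
    (hu.preimage_isClosed_of_isClosed isClosed_closedBall isClosed_Iic) inter_subset_left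
  obtain ⟨z, ⟨hz, hzβ⟩, hzmin⟩ :=
    hK.exists_isMinOn ⟨z₀, mem_closedBall_zero_iff.2 le_rfl, hz₀⟩ continuous_norm.continuousOn
  have hz0 : z ≠ 0 := by rintro rfl; exact (lt_of_lt_of_le h0 hzβ).false
  have hball : ball (0 : E) ‖z‖ ⊆ closedBall 0 ‖z₀‖ ∩ u ⁻¹' Ici β := by
    intro w hw
    have hw' : w ∈ closedBall (0 : E) ‖z₀‖ :=
      mem_closedBall_zero_iff.2 ((mem_ball_zero_iff.1 hw).le.trans (mem_closedBall_zero_iff.1 hz))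
    refine ⟨hw', show β ≤ u w from le_of_not_ge fun hwβ ↦ ?_⟩
    exact (mem_ball_zero_iff.1 hw).not_ge (hzmin ⟨hw', hwβ⟩)
  have hclosed : closedBall (0 : E) ‖z‖ ⊆ closedBall 0 ‖z₀‖ ∩ u ⁻¹' Ici β := by
    rw [← closure_ball 0 (norm_ne_zero_iff.2 hz0)]
    exact closure_minimal hball (hu.preimage_isClosed_of_isClosed isClosed_closedBall isClosed_Ici)
  have hzβ' : u z = β := le_antisymm hzβ (hclosed (mem_closedBall_zero_iff.2 le_rfl)).2
  exact ⟨z, hz, hzβ', fun w hw ↦ hzβ' ▸ (hclosed hw).2⟩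

theorem re_div_nonpos_of_im_eq_zero {w a : ℂ} (hw : w.im = 0) (hwre : w.re ≤ 0) (ha : 0 ≤ a.re) :
    (w / a).re ≤ 0 := by
  rw [div_re, hw, zero_mul, zero_div, add_zero]
  exact div_nonpos_of_nonpos_of_nonneg (mul_nonpos_of_nonpos_of_nonneg hwre ha) (normSq_nonneg a)

theorem stmt3_general (p α : ℂ → ℂ) (β : ℝ)
    (hp : DifferentiableOn ℂ p (ball (0 : ℂ) 1)) (hp0 : p 0 = 1)
    (hαpos : ∀ z ∈ ball (0 : ℂ) 1, 0 < (α z).re)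
    (hβ1 : β < 1)
    (h : ∀ z ∈ ball (0 : ℂ) 1, β < (p z + z * deriv p z / α z).re) :
    ∀ z ∈ ball (0 : ℂ) 1, β < (p z).re := by
  by_contra! ⟨z₀, hz₀, hz₀β⟩
  have hsub : closedBall (0 : ℂ) ‖z₀‖ ⊆ ball 0 1 := closedBall_subset_ball (mem_ball_zero_iff.1 hz₀)
  obtain ⟨z, hz, hzβ, hmin⟩ := exists_eq_isMinOn_closedBall (u := fun w ↦ (p w).re)
    (continuous_re.comp_continuousOn (hp.continuousOn.mono hsub)) (by simpa [hp0]) hz₀β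
  have hzE := hsub hz
  have hpz : HasDerivAt p (deriv p z) z :=
    (hp.differentiableAt (isOpen_ball.mem_nhds hzE)).hasDerivAt
  have hre := re_mul_deriv_nonpos_of_isMinOn_closedBall hpz hmin
  have him := im_mul_deriv_eq_zero_of_isMinOn_sphere hpz (hmin.on_subset sphere_subset_closedBall)
  have hquot := re_div_nonpos_of_im_eq_zero him hre (hαpos z hzE).le
  have hz_gt := h z hzE
  rw [add_re, hzβ] at hz_gt
  linarith

theorem stmt3 (p α : ℂ → ℂ) (β : ℝ)
    (hp : DifferentiableOn ℂ p (ball (0 : ℂ) 1)) (hp0 : p 0 = 1)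
    (hα : DifferentiableOn ℂ α (ball (0 : ℂ) 1))
    (hαpos : ∀ z ∈ ball (0 : ℂ) 1, 0 < (α z).re)
    (hβ0 : 0 ≤ β) (hβ1 : β < 1)
    (h : ∀ z ∈ ball (0 : ℂ) 1, β < (p z + z * deriv p z / α z).re) :
    ∀ z ∈ ball (0 : ℂ) 1, β < (p z).re :=
  stmt3_general p α β hp hp0 hαpos hβ1 h
end

section
/- If p is analytic on the unit disk with p(0)=1, α analytic with Re α(z) > 0, γ > 1, and Re[p(z) + z p'(z)/(1 + α(z))] < γ on E, then Re p(z) < γ on E (the 'reversed' case γ > 1 of the Babalola–Opoola lemma with ψ(u,v) = u + v/(1+α)). -/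
/-!
If `Re p ≥ γ` somewhere, let `r₀` be the least radius at which `Re p` reaches `γ` and let `z₀`
maximize `Re p` on the circle `|z| = r₀`; then `z₀` maximizes `Re p` on the whole closed disk of
radius `r₀`. At such a boundary maximum `z₀ p'(z₀)` is real (the derivative along the circle
vanishes) and nonnegative (`Re p` does not increase inwards). Dividing it by `1 + α(z₀)`, which has
positive real part, keeps the real part nonnegative, so `Re [p + z p' / (1 + α)] (z₀) ≥ γ`.
-/

open Metric Complex Set Filter
open scoped ComplexOrder

theorem exists_isMaxOn_closedBall_of_le {X : Type*} [MetricSpace X] [ProperSpace X]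
    {u : X → ℝ} {a z₁ : X} {r γ : ℝ} (hu : ContinuousOn u (closedBall a r))
    (hz₁ : z₁ ∈ closedBall a r) (hγ : γ ≤ u z₁) :
    ∃ z₀ ∈ closedBall a r, γ ≤ u z₀ ∧ IsMaxOn u (closedBall a (dist z₀ a)) z₀ := by
  have hK : IsCompact (closedBall a r ∩ u ⁻¹' Ici γ) :=
    (isCompact_closedBall a r).of_isClosed_subset
      (hu.preimage_isClosed_of_isClosed isClosed_closedBall isClosed_Ici) inter_subset_left
  obtain ⟨w, ⟨hwr, hwγ⟩, hwmin⟩ :=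
    hK.exists_isMinOn ⟨z₁, hz₁, hγ⟩ (continuous_id.dist continuous_const).continuousOn
  have hsub : closedBall a (dist w a) ⊆ closedBall a r := closedBall_subset_closedBall hwr
  obtain ⟨z₀, hz₀, hmax⟩ := (isCompact_sphere a (dist w a)).exists_isMaxOn
    ⟨w, mem_sphere.2 rfl⟩ (hu.mono (sphere_subset_closedBall.trans hsub))
  have hγz₀ : γ ≤ u z₀ := hwγ.trans (hmax (mem_sphere.2 rfl))
  rw [mem_sphere] at hz₀
  refine ⟨z₀, hsub (mem_closedBall.2 hz₀.le), hγz₀, isMaxOn_iff.2 fun z hz => ?_⟩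
  rw [hz₀] at hz
  rcases (mem_closedBall.1 hz).lt_or_eq with hlt | heq
  · by_contra! hzγ
    exact (hwmin ⟨hsub hz, hγz₀.trans hzγ.le⟩).not_gt hlt
  · exact hmax (mem_sphere.2 heq)

theorem HasDerivAt.hasFDerivAt_re {f : ℂ → ℂ} {c z : ℂ} (hf : HasDerivAt f c z) :
    HasFDerivAt (fun w => (f w).re)
      (reCLM.comp ((ContinuousLinearMap.toSpanSingleton ℂ c).restrictScalars ℝ)) z :=
  reCLM.hasFDerivAt.comp z (hf.hasFDerivAt.restrictScalars ℝ)

theorem im_mul_deriv_eq_zero_of_isMaxOn_sphere {f : ℂ → ℂ} {z : ℂ}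
    (hf : DifferentiableAt ℂ f z) (hmax : IsMaxOn (fun w => (f w).re) (sphere 0 ‖z‖) z) :
    (z * deriv f z).im = 0 := by
  have hrot : HasDerivAt (fun θ : ℝ => exp (θ * I) * z) (I * z) 0 := by
    simpa using ((((hasDerivAt_id (0 : ℂ)).mul_const I).cexp).mul_const z).comp_ofReal
  have hderiv := hf.hasDerivAt.hasFDerivAt_re.comp_hasDerivAt_of_eq 0 hrot (by simp)
  have hloc : IsLocalMax (fun θ : ℝ => (f (exp (θ * I) * z)).re) 0 :=
    Eventually.of_forall fun θ => by
      simpa using hmax (by simp [norm_exp_ofReal_mul_I] : exp (θ * I) * z ∈ sphere 0 ‖z‖)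
  have h0 : (I * (z * deriv f z)).re = 0 := by
    simpa [mul_assoc] using hloc.hasDerivAt_eq_zero hderiv
  simpa only [I_mul_re, neg_eq_zero] using h0

theorem re_mul_deriv_nonneg_of_isMaxOn_closedBall {f : ℂ → ℂ} {z : ℂ}
    (hf : DifferentiableAt ℂ f z) (hmax : IsMaxOn (fun w => (f w).re) (closedBall 0 ‖z‖) z) :
    0 ≤ (z * deriv f z).re := by
  have hcone : 0 - z ∈ posTangentConeAt (closedBall 0 ‖z‖) z :=
    sub_mem_posTangentConeAt_of_segment_subset
      ((convex_closedBall 0 ‖z‖).segment_subset (by simp) (by simp))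
  have h0 : (-(z * deriv f z)).re ≤ 0 := by
    simpa [mul_comm] using
      hmax.localize.hasFDerivWithinAt_nonpos hf.hasDerivAt.hasFDerivAt_re.hasFDerivWithinAt hcone
  simpa only [neg_re, neg_nonpos] using h0

theorem nonneg_mul_deriv_of_isMaxOn_closedBall {f : ℂ → ℂ} {z : ℂ}
    (hf : DifferentiableAt ℂ f z) (hmax : IsMaxOn (fun w => (f w).re) (closedBall 0 ‖z‖) z) :
    0 ≤ z * deriv f z :=
  nonneg_iff.2 ⟨re_mul_deriv_nonneg_of_isMaxOn_closedBall hf hmax,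
    (im_mul_deriv_eq_zero_of_isMaxOn_sphere hf (hmax.on_subset sphere_subset_closedBall)).symm⟩

theorem re_div_nonneg {w a : ℂ} (hw : 0 ≤ w) (ha : 0 < a.re) : 0 ≤ (w / a).re := by
  obtain ⟨hre, him⟩ := nonneg_iff.1 hw
  rw [div_re, ← him, zero_mul, zero_div, add_zero]
  exact div_nonneg (mul_nonneg hre ha.le) (normSq_nonneg a)

theorem stmt13_general (p α : ℂ → ℂ) (γ : ℝ)
    (hp : DifferentiableOn ℂ p (ball (0 : ℂ) 1))
    (hαpos : ∀ z ∈ ball (0 : ℂ) 1, 0 < (α z).re)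
    (h : ∀ z ∈ ball (0 : ℂ) 1, (p z + z * deriv p z / (1 + α z)).re < γ) :
    ∀ z ∈ ball (0 : ℂ) 1, (p z).re < γ := by
  intro z₁ hz₁
  by_contra! hγ
  have hsub : closedBall (0 : ℂ) ‖z₁‖ ⊆ ball 0 1 :=
    closedBall_subset_ball (mem_ball_zero_iff.1 hz₁)
  obtain ⟨z₀, hz₀, hγz₀, hmax⟩ := exists_isMaxOn_closedBall_of_le
    (continuous_re.comp_continuousOn (hp.continuousOn.mono hsub))
    (mem_closedBall_zero_iff.2 le_rfl) hγ
  have hz₀' : z₀ ∈ ball (0 : ℂ) 1 := hsub hz₀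
  rw [dist_zero_right] at hmax
  have hderiv := nonneg_mul_deriv_of_isMaxOn_closedBall
    (hp.differentiableAt (isOpen_ball.mem_nhds hz₀')) hmax
  have hquot : 0 ≤ (z₀ * deriv p z₀ / (1 + α z₀)).re :=
    re_div_nonneg hderiv (by simpa using add_pos one_pos (hαpos z₀ hz₀'))
  exact (h z₀ hz₀').not_ge (by rw [add_re]; exact le_add_of_le_of_nonneg hγz₀ hquot)

theorem stmt13 (p α : ℂ → ℂ) (γ : ℝ)
    (hp : DifferentiableOn ℂ p (ball (0 : ℂ) 1)) (hp0 : p 0 = 1)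
    (hα : DifferentiableOn ℂ α (ball (0 : ℂ) 1))
    (hαpos : ∀ z ∈ ball (0 : ℂ) 1, 0 < (α z).re)
    (hγ : 1 < γ)
    (h : ∀ z ∈ ball (0 : ℂ) 1, (p z + z * deriv p z / (1 + α z)).re < γ) :
    ∀ z ∈ ball (0 : ℂ) 1, (p z).re < γ :=
  stmt13_general p α γ hp hαpos h
end
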